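/- Let U ⊆ S^m_d be a quasi-stable monomial module and G a P(U)-marked set. Then G is a P(U)-marked basis if and only if for every f_α^k ∈ G and every nonmultiplicative variable x_i of x^α, the element x_i f_α^k reduces to 0 under the reduction relation →_G. -/

import Mathlib

/-!
Every term `x^γ e_k` of `U` has a unique Pommaret decomposition `x^γ = x^η x^α`, and
reducing it by `x^η f_α^k` only creates terms of `U` whose multipliers are smaller than `x^η`
in the order `lexLt`, which is Mathlib's `Colex` order on `Exp n`. Hence `→_G` terminates, and reducing a homogeneous element to a normal form
shows that `(S^m_d)_s = ⟨G⟩_s + ⟨N(U)_s⟩` always holds.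

If `G` is a marked basis, the normal form of `x_i f_α^k` lies in `⟨G⟩_s ∩ ⟨N(U)_s⟩ = 0`.
Conversely, if all `x_i f_α^k` reduce to `0`, then every `x^ε f_α^k`, and with it all of `⟨G⟩`,
is an `A`-combination of the multiplicative multiples `x^η f_α^k`. These are triangular with
respect to their pairwise distinct head terms in `U`, so no nonzero combination of them lies in
`⟨N(U)⟩`, and the sum is direct.
-/

open MvPolynomial

namespace MB

/-- Exponent (multi-index) of a term in the variables `x_0, …, x_n`. -/
abbrev Exp (n : ℕ) := Fin (n+1) →₀ ℕ

variable {n : ℕ}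

/-- Total degree of a term. -/
def degE (α : Exp n) : ℕ := α.sum fun _ e => e

/-- `x_i` is a multiplicative variable for the term `x^α`, i.e. `x_i ≤ min(x^α)`. -/
def mult (α : Exp n) (i : Fin (n+1)) : Prop := ∀ j ∈ α.support, i ≤ j

/-- Every variable occurring in `x^δ` is multiplicative for `x^α`. -/
def multExp (α δ : Exp n) : Prop := ∀ i ∈ δ.support, mult α i

/-- Pommaret cone of a term. -/
def pommaretCone (α : Exp n) : Set (Exp n) := {γ | ∃ δ, multExp α δ ∧ γ = α + δ}

/-- A set of terms is (the set of terms of) a monomial ideal. -/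
def IsMonomialIdeal (T : Set (Exp n)) : Prop := ∀ α ∈ T, ∀ β, α + β ∈ T

/-- `P` is a Pommaret basis of the set of terms `T`: the terms of `T` are the
disjoint union of the Pommaret cones of the elements of `P`. -/
def IsPommaretBasis (P : Finset (Exp n)) (T : Set (Exp n)) : Prop :=
  (∀ γ, γ ∈ T ↔ ∃ α ∈ P, γ ∈ pommaretCone α) ∧
  ∀ γ : Exp n, ∀ α ∈ P, ∀ β ∈ P, γ ∈ pommaretCone α → γ ∈ pommaretCone β → α = β

/-- Lexicographic order on terms (with `x_n > … > x_0` significance). -/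
def lexLt (η δ : Exp n) : Prop := ∃ i, η i < δ i ∧ ∀ j, i < j → η j = δ j

/-- Terms of the saturation `(J : (x_0,…,x_n)^∞)` of a monomial ideal. -/
def satTerms (T : Set (Exp n)) : Set (Exp n) :=
  {α | ∃ j : ℕ, ∀ β : Exp n, degE β = j → α + β ∈ T}

section ModuleDefs

variable (A : Type*) [CommRing A] {κ : Type*} [Fintype κ] [DecidableEq κ]

/-- The term `x^α e_k` of the free module. -/
noncomputable def termV (α : Exp n) (k : κ) : κ → MvPolynomial (Fin (n+1)) A :=
  Pi.single k (monomial α 1)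

variable {A}

/-- Homogeneity of degree `s` in `S^m_d` (with weight vector `d`). -/
def IsHomogV (d : κ → ℤ) (f : κ → MvPolynomial (Fin (n+1)) A) (s : ℤ) : Prop :=
  ∀ k, ∀ β ∈ (f k).support, (degE β : ℤ) + d k = s

variable (A)

/-- The degree-`s` component `(S^m_d)_s` as an `A`-submodule. -/
noncomputable def homogCompV (d : κ → ℤ) (s : ℤ) :
    Submodule A (κ → MvPolynomial (Fin (n+1)) A) where
  carrier := {f | IsHomogV d f s}
  add_mem' := by
    intro f g hf hg k β hβ
    rcases Finset.mem_union.mp (MvPolynomial.support_add hβ) with h | h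
    · exact hf k β h
    · exact hg k β h
  zero_mem' := by intro k β hβ; simp at hβ
  smul_mem' := by
    intro a f hf k β hβ
    exact hf k β (MvPolynomial.support_smul hβ)

/-- The set `N(U)` of terms of `S^m_d` not belonging to the monomial module `U = ⊕ J^(k) e_k`. -/
def NUTerms (J : κ → Set (Exp n)) : Set (κ → MvPolynomial (Fin (n+1)) A) :=
  {v | ∃ k, ∃ α, α ∉ J k ∧ v = termV A α k}

/-- The degree-`s` part `N(U)_s`. -/
def NUTermsDeg (d : κ → ℤ) (J : κ → Set (Exp n)) (s : ℤ) :
    Set (κ → MvPolynomial (Fin (n+1)) A) :=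
  {v | ∃ k, ∃ α, α ∉ J k ∧ (degE α : ℤ) + d k = s ∧ v = termV A α k}

variable {A}

/-- A `P(U)`-marked set: for each `x^α e_k` with `α ∈ P k`, the element `g α k` has
head term `x^α e_k` (coefficient `1`) and all other terms in `N(U)` of the same degree. -/
def IsMarkedSetV (d : κ → ℤ) (J : κ → Set (Exp n)) (P : κ → Finset (Exp n))
    (g : Exp n → κ → (κ → MvPolynomial (Fin (n+1)) A)) : Prop :=
  ∀ k, ∀ α ∈ P k, ∀ l, ∀ β ∈ ((g α k - termV A α k) l).support,
    β ∉ J l ∧ (degE β : ℤ) + d l = (degE α : ℤ) + d k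

/-- The underlying set of elements of the marked set `G`. -/
def GSet (P : κ → Finset (Exp n)) (g : Exp n → κ → (κ → MvPolynomial (Fin (n+1)) A)) :
    Set (κ → MvPolynomial (Fin (n+1)) A) :=
  {v | ∃ k, ∃ α ∈ P k, v = g α k}

/-- The set `G^(s)` of multiplicative multiples of elements of `G` of degree `s`. -/
def GSdeg (d : κ → ℤ) (P : κ → Finset (Exp n))
    (g : Exp n → κ → (κ → MvPolynomial (Fin (n+1)) A)) (s : ℤ) :
    Set (κ → MvPolynomial (Fin (n+1)) A) :=
  {v | ∃ k, ∃ α ∈ P k, ∃ δ : Exp n, multExp α δ ∧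
    (degE δ : ℤ) + (degE α : ℤ) + d k = s ∧ v = (monomial δ (1:A)) • g α k}

/-- The `S`-submodule `⟨G⟩` generated by the marked set. -/
noncomputable def GmodS (P : κ → Finset (Exp n))
    (g : Exp n → κ → (κ → MvPolynomial (Fin (n+1)) A)) :
    Submodule (MvPolynomial (Fin (n+1)) A) (κ → MvPolynomial (Fin (n+1)) A) :=
  Submodule.span _ (GSet P g)

/-- The degree-`s` component `⟨G⟩_s` as an `A`-submodule. -/
noncomputable def GmodDeg (d : κ → ℤ) (P : κ → Finset (Exp n))
    (g : Exp n → κ → (κ → MvPolynomial (Fin (n+1)) A)) (s : ℤ) :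
    Submodule A (κ → MvPolynomial (Fin (n+1)) A) :=
  (GmodS P g).restrictScalars A ⊓ homogCompV A d s

/-- `G` is a marked basis: `(S^m_d)_s = ⟨G⟩_s ⊕ ⟨N(U)_s⟩^A` for every degree `s`. -/
def MarkedBasisProp (d : κ → ℤ) (J : κ → Set (Exp n)) (P : κ → Finset (Exp n))
    (g : Exp n → κ → (κ → MvPolynomial (Fin (n+1)) A)) : Prop :=
  ∀ s : ℤ,
    homogCompV A d s = GmodDeg d P g s ⊔ Submodule.span A (NUTermsDeg A d J s) ∧
    GmodDeg d P g s ⊓ Submodule.span A (NUTermsDeg A d J s) = ⊥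

/-- One step of the reduction relation `→_G`. -/
def RedStep (P : κ → Finset (Exp n)) (g : Exp n → κ → (κ → MvPolynomial (Fin (n+1)) A))
    (h h' : κ → MvPolynomial (Fin (n+1)) A) : Prop :=
  ∃ k, ∃ α ∈ P k, ∃ η : Exp n, multExp α η ∧
    (h k).coeff (η + α) ≠ 0 ∧
    h' = h - ((h k).coeff (η + α)) • ((monomial η (1:A)) • g α k)

end ModuleDefs

section IdealDefs

variable {A : Type*} [CommRing A]

/-- A `P(J)`-marked set of polynomials. -/
def IsMarkedSetI (T : Set (Exp n)) (P : Finset (Exp n))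
    (g : Exp n → MvPolynomial (Fin (n+1)) A) : Prop :=
  ∀ α ∈ P, ∀ β ∈ (g α - monomial α (1:A)).support, β ∉ T ∧ degE β = degE α

variable (A)

/-- The degree-`s` monomials not in `T`. -/
def NTermsDegI (T : Set (Exp n)) (s : ℕ) : Set (MvPolynomial (Fin (n+1)) A) :=
  {p | ∃ β, β ∉ T ∧ degE β = s ∧ p = monomial β (1:A)}

variable {A}

/-- Degree-`s` part of the ideal generated by the marked set. -/
noncomputable def IdealDegI (P : Finset (Exp n)) (g : Exp n → MvPolynomial (Fin (n+1)) A)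
    (s : ℕ) : Submodule A (MvPolynomial (Fin (n+1)) A) :=
  (Ideal.span (g '' ↑P)).restrictScalars A ⊓ homogeneousSubmodule (Fin (n+1)) A s

/-- A `P(J)`-marked basis of polynomials: `S_s = (G)_s ⊕ ⟨N(J)_s⟩^A` for all `s`. -/
def IsMarkedBasisI (T : Set (Exp n)) (P : Finset (Exp n))
    (g : Exp n → MvPolynomial (Fin (n+1)) A) : Prop :=
  IsMarkedSetI T P g ∧ ∀ s : ℕ,
    homogeneousSubmodule (Fin (n+1)) A s
      = IdealDegI P g s ⊔ Submodule.span A (NTermsDegI A T s) ∧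
    IdealDegI P g s ⊓ Submodule.span A (NTermsDegI A T s) = ⊥

/-- The polynomial `p` involves only multiplicative variables of `x^α`. -/
def multPoly (α : Exp n) (p : MvPolynomial (Fin (n+1)) A) : Prop :=
  ∀ β ∈ p.support, multExp α β

end IdealDefs

section SyzDefs

variable {A : Type*} [CommRing A]

/-- The map `(c_l) ↦ Σ_l c_l f_{α(l)}` whose kernel is `Syz(G)`. -/
noncomputable def syzMap (P : Finset (Exp n)) (g : Exp n → MvPolynomial (Fin (n+1)) A) :
    (↥P → MvPolynomial (Fin (n+1)) A) →ₗ[MvPolynomial (Fin (n+1)) A]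
      MvPolynomial (Fin (n+1)) A where
  toFun c := ∑ l : ↥P, c l * g l.1
  map_add' c c' := by simp [add_mul, Finset.sum_add_distrib]
  map_smul' a c := by simp [Finset.mul_sum, mul_assoc]

/-- Weight vector for the syzygy module: `d_l = deg x^{α(l)}`. -/
def ddeg (P : Finset (Exp n)) : ↥P → ℤ := fun l => (degE l.1 : ℤ)

/-- Terms of the monomial ideal generated by the nonmultiplicative variables of `x^{α(l)}`. -/
def Jsyz (P : Finset (Exp n)) : ↥P → Set (Exp n) :=
  fun l => {β | ∃ i ∈ β.support, ¬ mult (l : Exp n) i}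

open Classical in
/-- The claimed Pommaret basis `{x_i e_l : x_i nonmultiplicative for x^{α(l)}}`. -/
noncomputable def Psyz (P : Finset (Exp n)) : ↥P → Finset (Exp n) := fun l =>
  (Finset.univ.filter fun i : Fin (n+1) => ¬ mult (l : Exp n) i).image
    fun i => Finsupp.single i 1

open Classical in
/-- The syzygy `S_{k;i} = x_i e_k − Σ_l P_l^{k;i} e_l`. -/
noncomputable def Ssyz (P : Finset (Exp n))
    (Pc : ↥P → Fin (n+1) → ↥P → MvPolynomial (Fin (n+1)) A)
    (k : ↥P) (i : Fin (n+1)) : ↥P → MvPolynomial (Fin (n+1)) A :=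
  fun l => (if l = k then (X i : MvPolynomial (Fin (n+1)) A) else 0) - Pc k i l

/-- The set `G_Syz^(s)`. -/
def GSyzDeg (P : Finset (Exp n))
    (Pc : ↥P → Fin (n+1) → ↥P → MvPolynomial (Fin (n+1)) A) (s : ℤ) :
    Set (↥P → MvPolynomial (Fin (n+1)) A) :=
  {v | ∃ k : ↥P, ∃ i : Fin (n+1), ¬ mult (k : Exp n) i ∧ ∃ δ : Exp n,
    (∀ j ∈ δ.support, j ≤ i) ∧ (degE δ : ℤ) + 1 + ddeg P k = s ∧
    v = (monomial δ (1:A)) • Ssyz P Pc k i}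

end SyzDefs

section Pommaret

variable {P : Finset (Exp n)} {T : Set (Exp n)} {α β γ ε η η' : Exp n}

theorem mem_pommaretCone_iff : γ ∈ pommaretCone α ↔ α ≤ γ ∧ multExp α (γ - α) := by
  constructor
  · rintro ⟨δ, hδ, rfl⟩
    simpa using hδ
  · rintro ⟨hle, hmul⟩
    exact ⟨γ - α, hmul, (add_tsub_cancel_of_le hle).symm⟩

theorem mem_pommaretCone_self (α : Exp n) : α ∈ pommaretCone α :=
  mem_pommaretCone_iff.mpr ⟨le_rfl, by simp [multExp]⟩

/-- The colex order compares `x_n` first, while the multiplicative variables of `x^α` are the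
smallest ones: this is what makes the order compatible with Pommaret cones. -/
theorem mem_pommaretCone_of_toColex_lt (hη : multExp α η) (e : η' + β = η + α)
    (hlt : toColex η' < toColex η) : β ∈ pommaretCone α := by
  obtain ⟨i, hhigh, hi⟩ := Finsupp.Colex.lt_iff.mp hlt
  simp only [ofColex_toColex] at hhigh hi
  have hαi : mult α i := hη i (by simp only [Finsupp.mem_support_iff]; omega)
  have he : ∀ j, η' j + β j = η j + α j := fun j => by simpa using DFunLike.congr_fun e j
  have hle : α ≤ β := fun j => by
    rcases lt_trichotomy j i with hj | rfl | hj
    · have : α j = 0 := by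
        by_contra h
        exact (hαi j (Finsupp.mem_support_iff.mpr h)).not_gt hj
      omega
    · have := he j; omega
    · have := he j; have := hhigh j hj; omega
  refine mem_pommaretCone_iff.mpr ⟨hle, fun j hj => ?_⟩
  have hji : j ≤ i := by
    by_contra! hij
    have := he j; have := hhigh j hij
    simp only [Finsupp.mem_support_iff, Finsupp.coe_tsub, Pi.sub_apply] at hj
    omega
  exact fun l hl => hji.trans (hαi l hl)

open Classical in
/-- Junk value `0` when `x^γ` lies in no Pommaret cone of `P`. -/
noncomputable def pommaretHead (P : Finset (Exp n)) (γ : Exp n) : Exp n :=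
  if h : ∃ α ∈ P, γ ∈ pommaretCone α then h.choose else 0

noncomputable def pommaretMultiplier (P : Finset (Exp n)) (γ : Exp n) : Exp n :=
  γ - pommaretHead P γ

theorem IsPommaretBasis.mem_of_mem_pommaretCone (hP : IsPommaretBasis P T) (hα : α ∈ P)
    (hγ : γ ∈ pommaretCone α) : γ ∈ T :=
  (hP.1 γ).mpr ⟨α, hα, hγ⟩

theorem IsPommaretBasis.pommaretHead_mem (hP : IsPommaretBasis P T) (hγ : γ ∈ T) :
    pommaretHead P γ ∈ P ∧ γ ∈ pommaretCone (pommaretHead P γ) := by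
  have hex := (hP.1 γ).mp hγ
  rw [pommaretHead, dif_pos hex]
  exact hex.choose_spec

theorem IsPommaretBasis.pommaretHead_eq (hP : IsPommaretBasis P T) (hα : α ∈ P)
    (hγ : γ ∈ pommaretCone α) : pommaretHead P γ = α :=
  have hs := hP.pommaretHead_mem (hP.mem_of_mem_pommaretCone hα hγ)
  hP.2 γ _ hs.1 α hα hs.2 hγ

theorem IsPommaretBasis.multExp_pommaretMultiplier (hP : IsPommaretBasis P T) (hγ : γ ∈ T) :
    multExp (pommaretHead P γ) (pommaretMultiplier P γ) :=
  (mem_pommaretCone_iff.mp (hP.pommaretHead_mem hγ).2).2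

theorem IsPommaretBasis.pommaretMultiplier_add_pommaretHead (hP : IsPommaretBasis P T)
    (hγ : γ ∈ T) : pommaretMultiplier P γ + pommaretHead P γ = γ :=
  tsub_add_cancel_of_le (mem_pommaretCone_iff.mp (hP.pommaretHead_mem hγ).2).1

theorem IsPommaretBasis.pommaretHead_add (hP : IsPommaretBasis P T) (hα : α ∈ P)
    (hη : multExp α η) : pommaretHead P (η + α) = α :=
  hP.pommaretHead_eq hα ⟨η, hη, add_comm η α⟩

theorem IsPommaretBasis.pommaretMultiplier_add (hP : IsPommaretBasis P T) (hα : α ∈ P)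
    (hη : multExp α η) : pommaretMultiplier P (η + α) = η := by
  rw [pommaretMultiplier, hP.pommaretHead_add hα hη, add_tsub_cancel_right]

theorem IsPommaretBasis.toColex_pommaretMultiplier_lt (hP : IsPommaretBasis P T) (hβ : β ∉ T)
    (hγ : ε + β ∈ T) : toColex (pommaretMultiplier P (ε + β)) < toColex ε := by
  have hα := hP.pommaretHead_mem hγ
  have e := hP.pommaretMultiplier_add_pommaretHead hγ
  rcases lt_trichotomy (toColex (pommaretMultiplier P (ε + β))) (toColex ε) with h | h | h
  · exact h
  · rw [toColex_inj.mp h, add_right_inj] at e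
    exact absurd (e ▸ hP.mem_of_mem_pommaretCone hα.1 (mem_pommaretCone_self _)) hβ
  · exact absurd (hP.mem_of_mem_pommaretCone hα.1 <|
      mem_pommaretCone_of_toColex_lt (hP.multExp_pommaretMultiplier hγ) e.symm h) hβ

theorem IsPommaretBasis.toColex_pommaretMultiplier_lt_of_not_multExp
    (hP : IsPommaretBasis P T) (hα : α ∈ P) (hε : ¬ multExp α ε) (hγ : ε + α ∈ T) :
    toColex (pommaretMultiplier P (ε + α)) < toColex ε := by
  have hα' := hP.pommaretHead_mem hγ
  have hη := hP.multExp_pommaretMultiplier hγ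
  have e := hP.pommaretMultiplier_add_pommaretHead hγ
  rcases lt_trichotomy (toColex (pommaretMultiplier P (ε + α))) (toColex ε) with h | h | h
  · exact h
  · rw [toColex_inj.mp h, add_right_inj] at e
    rw [toColex_inj.mp h, e] at hη
    exact absurd hη hε
  · have hhead : pommaretHead P (ε + α) = α :=
      hP.2 α _ hα'.1 α hα (mem_pommaretCone_of_toColex_lt hη e.symm h) (mem_pommaretCone_self α)
    rw [hhead, add_left_inj] at e
    exact absurd (e ▸ h) (lt_irrefl _)

end Pommaret

theorem degE_add (α β : Exp n) : degE (α + β) = degE α + degE β :=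
  map_add Finsupp.degree α β

section MarkedSet

variable {κ : Type*} {A : Type*} [CommRing A] {d : κ → ℤ} {J : κ → Set (Exp n)}
  {P : κ → Finset (Exp n)} {gb : Exp n → κ → κ → MvPolynomial (Fin (n+1)) A}
  {k l : κ} {α β γ ε : Exp n} {s : ℤ} {f : κ → MvPolynomial (Fin (n+1)) A}

theorem coeff_monomial_smul (ε : Exp n) (f : κ → MvPolynomial (Fin (n+1)) A) (l : κ)
    (γ : Exp n) :
    ((monomial ε (1 : A) • f) l).coeff γ = if ε ≤ γ then (f l).coeff (γ - ε) else 0 := by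
  simp [coeff_monomial_mul']

theorem exists_of_mem_support_monomial_smul (h : γ ∈ ((monomial ε (1 : A) • f) l).support) :
    ∃ β ∈ (f l).support, γ = ε + β := by
  rw [mem_support_iff, coeff_monomial_smul] at h
  split_ifs at h with hle
  · exact ⟨γ - ε, mem_support_iff.mpr h, (add_tsub_cancel_of_le hle).symm⟩
  · exact absurd rfl h

theorem monomial_smul_mem_homogCompV (hf : f ∈ homogCompV A d s) :
    monomial ε (1 : A) • f ∈ homogCompV A d (degE ε + s) := by
  intro l γ hγ
  obtain ⟨β, hβ, rfl⟩ := exists_of_mem_support_monomial_smul hγ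
  have := hf l β hβ
  rw [degE_add]
  push_cast
  linarith

variable [DecidableEq κ]

theorem coeff_termV (α : Exp n) (k l : κ) (β : Exp n) :
    (termV A α k l).coeff β = if l = k ∧ β = α then 1 else 0 := by
  by_cases hl : l = k
  · subst hl; simp [termV, coeff_monomial, eq_comm]
  · simp [termV, hl]

theorem IsMarkedSetV.mem_support (hG : IsMarkedSetV d J P gb) (hα : α ∈ P k)
    (hβ : β ∈ (gb α k l).support) :
    (l = k ∧ β = α) ∨ (β ∉ J l ∧ (degE β : ℤ) + d l = degE α + d k) := by
  by_cases htail : β ∈ ((gb α k - termV A α k) l).support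
  · exact Or.inr (hG k α hα l β htail)
  · left
    rw [notMem_support_iff, Pi.sub_apply, coeff_sub, sub_eq_zero] at htail
    rw [mem_support_iff, htail, coeff_termV] at hβ
    by_contra hc
    exact hβ (if_neg hc)

theorem IsMarkedSetV.coeff_of_mem (hG : IsMarkedSetV d J P gb) (hα : α ∈ P k)
    (hγ : γ ∈ J l) : (gb α k l).coeff γ = if l = k ∧ γ = α then 1 else 0 := by
  have htail : ((gb α k - termV A α k) l).coeff γ = 0 := by
    by_contra h
    exact (hG k α hα l γ (mem_support_iff.mpr h)).1 hγ
  rw [Pi.sub_apply, coeff_sub, sub_eq_zero] at htail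
  rw [htail, coeff_termV]

theorem IsMarkedSetV.mem_homogCompV (hG : IsMarkedSetV d J P gb) (hα : α ∈ P k) :
    gb α k ∈ homogCompV A d (degE α + d k) := by
  intro l β hβ
  rcases hG.mem_support hα hβ with ⟨rfl, rfl⟩ | ⟨-, h⟩
  · rfl
  · exact h

end MarkedSet

section MarkedMultiple

variable {κ : Type*} {A : Type*} [CommRing A] {d : κ → ℤ} {J : κ → Set (Exp n)}
  {P : κ → Finset (Exp n)} {gb : Exp n → κ → κ → MvPolynomial (Fin (n+1)) A}
  {k l : κ} {α γ ε η : Exp n} {t : Σ _ : κ, Exp n}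

/-- The element `x^η f_α^k` of `G^(s)` whose head term is `x^γ e_k`, for `t = ⟨k, γ⟩` and
`x^γ = x^η x^α` the Pommaret decomposition of `γ ∈ J k`. -/
noncomputable def markedMul (P : κ → Finset (Exp n))
    (gb : Exp n → κ → κ → MvPolynomial (Fin (n+1)) A) (t : Σ _ : κ, Exp n) :
    κ → MvPolynomial (Fin (n+1)) A :=
  monomial (pommaretMultiplier (P t.1) t.2) (1 : A) • gb (pommaretHead (P t.1) t.2) t.1

noncomputable def multKey (P : κ → Finset (Exp n)) (t : Σ _ : κ, Exp n) : Colex (Exp n) :=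
  toColex (pommaretMultiplier (P t.1) t.2)

theorem markedMul_add (hP : ∀ k, IsPommaretBasis (P k) (J k)) (hα : α ∈ P k)
    (hη : multExp α η) : markedMul P gb ⟨k, η + α⟩ = monomial η (1 : A) • gb α k := by
  simp only [markedMul, (hP k).pommaretMultiplier_add hα hη, (hP k).pommaretHead_add hα hη]

theorem markedMul_mem_GmodS (hP : ∀ k, IsPommaretBasis (P k) (J k)) (ht : t.2 ∈ J t.1) :
    markedMul P gb t ∈ GmodS P gb :=
  Submodule.smul_mem _ _ (Submodule.subset_span ⟨t.1, _, ((hP t.1).pommaretHead_mem ht).1, rfl⟩)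

variable [DecidableEq κ]

theorem IsMarkedSetV.multKey_lt_of_mem_support (hP : ∀ k, IsPommaretBasis (P k) (J k))
    (hG : IsMarkedSetV d J P gb) (hα : α ∈ P k) (hγ : γ ∈ J l)
    (hs : γ ∈ ((monomial ε (1 : A) • gb α k) l).support) :
    (l = k ∧ γ = ε + α) ∨ multKey P ⟨l, γ⟩ < toColex ε := by
  obtain ⟨β, hβ, rfl⟩ := exists_of_mem_support_monomial_smul hs
  rcases hG.mem_support hα hβ with ⟨rfl, rfl⟩ | ⟨hβJ, -⟩
  · exact Or.inl ⟨rfl, rfl⟩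
  · exact Or.inr ((hP l).toColex_pommaretMultiplier_lt hβJ hγ)

theorem IsMarkedSetV.coeff_markedMul_self (hP : ∀ k, IsPommaretBasis (P k) (J k))
    (hG : IsMarkedSetV d J P gb) (ht : t.2 ∈ J t.1) :
    (markedMul P gb t t.1).coeff t.2 = 1 := by
  have hα := ((hP t.1).pommaretHead_mem ht).1
  have e := (hP t.1).pommaretMultiplier_add_pommaretHead ht
  rw [markedMul, coeff_monomial_smul, if_pos (le_self_add.trans_eq e), tsub_eq_of_eq_add_rev e.symm,
    hG.coeff_of_mem hα ((hP t.1).mem_of_mem_pommaretCone hα (mem_pommaretCone_self _)),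
    if_pos ⟨rfl, rfl⟩]

theorem IsMarkedSetV.markedMul_mem_homogCompV (hP : ∀ k, IsPommaretBasis (P k) (J k))
    (hG : IsMarkedSetV d J P gb) (ht : t.2 ∈ J t.1) :
    markedMul P gb t ∈ homogCompV A d (degE t.2 + d t.1) := by
  have hdeg := congrArg degE ((hP t.1).pommaretMultiplier_add_pommaretHead ht)
  rw [degE_add] at hdeg
  have := monomial_smul_mem_homogCompV (ε := pommaretMultiplier (P t.1) t.2)
    (hG.mem_homogCompV ((hP t.1).pommaretHead_mem ht).1)
  rwa [← add_assoc, ← Nat.cast_add, hdeg] at this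

end MarkedMultiple

theorem isDershowitzMannaLT_map_val {ι α : Type*} [Preorder α] [DecidableEq ι] (f : ι → α)
    {s s' : Finset ι} {a : ι} (ha : a ∈ s) (ha' : a ∉ s')
    (h : ∀ b ∈ s', b ∈ s ∨ f b < f a) :
    Multiset.IsDershowitzMannaLT (s'.val.map f) (s.val.map f) := by
  have hcommon : s'.val.filter (· ∈ s) = s.val.filter (· ∈ s') :=
    (Multiset.Nodup.ext (Multiset.Nodup.filter _ s'.nodup) (Multiset.Nodup.filter _ s.nodup)).mpr
      fun b => by simp only [Multiset.mem_filter, Finset.mem_val, and_comm]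
  refine ⟨(s'.val.filter (· ∈ s)).map f, (s'.val.filter (· ∉ s)).map f,
    (s.val.filter (· ∉ s')).map f, ?_, ?_, ?_, ?_⟩
  · intro hZ
    have := Multiset.mem_map_of_mem f ((Multiset.mem_filter (p := (· ∉ s'))).mpr ⟨ha, ha'⟩)
    rw [hZ] at this
    exact Multiset.notMem_zero _ this
  · rw [← Multiset.map_add, Multiset.filter_add_not]
  · rw [hcommon, ← Multiset.map_add, Multiset.filter_add_not]
  · simp only [Multiset.mem_map, Multiset.mem_filter, Finset.mem_val]
    rintro _ ⟨b, ⟨hb, hbs⟩, rfl⟩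
    exact ⟨f a, ⟨a, ⟨ha, ha'⟩, rfl⟩, (h b hb).resolve_left hbs⟩

section Reduction

variable {κ : Type*} [Fintype κ] {A : Type*} [CommRing A] {d : κ → ℤ}
  {J : κ → Set (Exp n)} {P : κ → Finset (Exp n)}
  {gb : Exp n → κ → κ → MvPolynomial (Fin (n+1)) A}
  {h h' : κ → MvPolynomial (Fin (n+1)) A} {t : Σ _ : κ, Exp n}

open Classical in
noncomputable def uTerms (J : κ → Set (Exp n)) (h : κ → MvPolynomial (Fin (n+1)) A) :
    Finset (Σ _ : κ, Exp n) :=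
  Finset.univ.sigma fun k => (h k).support.filter (· ∈ J k)

theorem mem_uTerms : t ∈ uTerms J h ↔ t.2 ∈ (h t.1).support ∧ t.2 ∈ J t.1 := by
  simp [uTerms]

theorem uTerms_eq_empty_iff : uTerms J h = ∅ ↔ ∀ k, ∀ γ ∈ (h k).support, γ ∉ J k := by
  simp only [Finset.eq_empty_iff_forall_notMem, mem_uTerms, not_and, Sigma.forall]

noncomputable def reduceAt (P : κ → Finset (Exp n))
    (gb : Exp n → κ → κ → MvPolynomial (Fin (n+1)) A) (h : κ → MvPolynomial (Fin (n+1)) A)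
    (t : Σ _ : κ, Exp n) : κ → MvPolynomial (Fin (n+1)) A :=
  h - (h t.1).coeff t.2 • markedMul P gb t

theorem redStep_reduceAt (hP : ∀ k, IsPommaretBasis (P k) (J k)) (ht : t ∈ uTerms J h) :
    RedStep P gb h (reduceAt P gb h t) := by
  obtain ⟨hs, hJ⟩ := mem_uTerms.mp ht
  have e := (hP t.1).pommaretMultiplier_add_pommaretHead hJ
  refine ⟨t.1, _, ((hP t.1).pommaretHead_mem hJ).1, _,
    (hP t.1).multExp_pommaretMultiplier hJ, ?_, ?_⟩
  · rw [e]
    exact mem_support_iff.mp hs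
  · rw [e]
    rfl

theorem RedStep.exists_eq_reduceAt (hP : ∀ k, IsPommaretBasis (P k) (J k))
    (hr : RedStep P gb h h') : ∃ t ∈ uTerms J h, h' = reduceAt P gb h t := by
  obtain ⟨k, α, hα, η, hη, hc, rfl⟩ := hr
  refine ⟨⟨k, η + α⟩, mem_uTerms.mpr ⟨mem_support_iff.mpr hc, ?_⟩, ?_⟩
  · exact (hP k).mem_of_mem_pommaretCone hα ⟨η, hη, add_comm η α⟩
  · rw [reduceAt, markedMul_add hP hα hη]

variable [DecidableEq κ]

theorem IsMarkedSetV.multKey_lt_of_mem_uTerms_markedMul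
    (hP : ∀ k, IsPommaretBasis (P k) (J k)) (hG : IsMarkedSetV d J P gb) (ht : t.2 ∈ J t.1)
    {t' : Σ _ : κ, Exp n} (ht' : t' ∈ uTerms J (markedMul P gb t)) (hne : t' ≠ t) :
    multKey P t' < multKey P t := by
  obtain ⟨hs, hJ⟩ := mem_uTerms.mp ht'
  refine (hG.multKey_lt_of_mem_support hP ((hP t.1).pommaretHead_mem ht).1 hJ hs).resolve_left ?_
  rintro ⟨h1, h2⟩
  exact hne (Sigma.ext h1 (heq_of_eq
    (h2.trans ((hP t.1).pommaretMultiplier_add_pommaretHead ht))))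

theorem IsMarkedSetV.multKey_lt_of_mem_uTerms_monomial_smul
    (hP : ∀ k, IsPommaretBasis (P k) (J k)) (hG : IsMarkedSetV d J P gb) {k : κ} {α ε : Exp n}
    (hα : α ∈ P k) (hε : ¬ multExp α ε) (ht : t ∈ uTerms J (monomial ε (1 : A) • gb α k)) :
    multKey P t < toColex ε := by
  obtain ⟨hs, hJ⟩ := mem_uTerms.mp ht
  rcases hG.multKey_lt_of_mem_support hP hα hJ hs with ⟨h1, h2⟩ | h
  · obtain ⟨l, γ⟩ := t
    dsimp only at h1 h2 hJ
    subst h1 h2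
    exact (hP l).toColex_pommaretMultiplier_lt_of_not_multExp hα hε hJ
  · exact h

theorem IsMarkedSetV.uTerms_reduceAt (hP : ∀ k, IsPommaretBasis (P k) (J k))
    (hG : IsMarkedSetV d J P gb) (ht : t ∈ uTerms J h) :
    t ∉ uTerms J (reduceAt P gb h t) ∧
      ∀ t' ∈ uTerms J (reduceAt P gb h t), t' ∈ uTerms J h ∨ multKey P t' < multKey P t := by
  have hJ := (mem_uTerms.mp ht).2
  have hcoeff : ∀ t' : Σ _ : κ, Exp n, (reduceAt P gb h t t'.1).coeff t'.2 =
      (h t'.1).coeff t'.2 - (h t.1).coeff t.2 * (markedMul P gb t t'.1).coeff t'.2 :=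
    fun t' => by simp [reduceAt]
  refine ⟨fun hmem => ?_, fun t' ht' => ?_⟩
  · have := mem_support_iff.mp (mem_uTerms.mp hmem).1
    rw [hcoeff, hG.coeff_markedMul_self hP hJ, mul_one, sub_self] at this
    exact this rfl
  · by_cases hold : t' ∈ uTerms J h
    · exact Or.inl hold
    obtain ⟨hs', hJ'⟩ := mem_uTerms.mp ht'
    have hold' : (h t'.1).coeff t'.2 = 0 := by
      by_contra hne
      exact hold (mem_uTerms.mpr ⟨mem_support_iff.mpr hne, hJ'⟩)
    have hmem : t' ∈ uTerms J (markedMul P gb t) := by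
      refine mem_uTerms.mpr ⟨mem_support_iff.mpr fun h0 => ?_, hJ'⟩
      exact mem_support_iff.mp hs' (by rw [hcoeff, hold', h0, mul_zero, sub_zero])
    refine Or.inr (hG.multKey_lt_of_mem_uTerms_markedMul hP hJ hmem ?_)
    rintro rfl
    exact hold ht

/-- Termination of `→_G`: the multiset of multipliers of the terms in `U` decreases in the
Dershowitz–Manna order. -/
theorem IsMarkedSetV.exists_reflTransGen_uTerms_eq_empty (hP : ∀ k, IsPommaretBasis (P k) (J k))
    (hG : IsMarkedSetV d J P gb) (h : κ → MvPolynomial (Fin (n+1)) A) :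
    ∃ h', Relation.ReflTransGen (RedStep P gb) h h' ∧ uTerms J h' = ∅ := by
  classical
  induction h using (InvImage.wf (fun h => (uTerms J h).val.map (multKey P))
    Multiset.wellFounded_isDershowitzMannaLT).induction with
  | _ h ih =>
  obtain hU | ⟨t, ht⟩ := (uTerms J h).eq_empty_or_nonempty
  · exact ⟨h, .refl, hU⟩
  obtain ⟨hgone, hnew⟩ := hG.uTerms_reduceAt hP ht
  obtain ⟨h', hr, hU⟩ := ih _ (isDershowitzMannaLT_map_val _ ht hgone hnew)
  exact ⟨h', .head (redStep_reduceAt hP ht) hr, hU⟩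

end Reduction

section Span

variable {κ : Type*} [Fintype κ] [DecidableEq κ] {A : Type*} [CommRing A] {d : κ → ℤ}
  {J : κ → Set (Exp n)} {P : κ → Finset (Exp n)}
  {gb : Exp n → κ → κ → MvPolynomial (Fin (n+1)) A} {s : ℤ}
  {h h' : κ → MvPolynomial (Fin (n+1)) A}

theorem IsMarkedSetV.sub_mem_span_markedMul_of_reflTransGen
    (hP : ∀ k, IsPommaretBasis (P k) (J k)) (hG : IsMarkedSetV d J P gb) {μ : Colex (Exp n)}
    (hr : Relation.ReflTransGen (RedStep P gb) h h') (hμ : ∀ t ∈ uTerms J h, multKey P t < μ) :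
    h - h' ∈ Submodule.span A (markedMul P gb '' {t | t.2 ∈ J t.1 ∧ multKey P t < μ}) := by
  induction hr using Relation.ReflTransGen.head_induction_on with
  | refl => simp
  | @head h _ step _ ih =>
    obtain ⟨t, ht, rfl⟩ := step.exists_eq_reduceAt hP
    rw [show h - h' = (h t.1).coeff t.2 • markedMul P gb t + (reduceAt P gb h t - h') by
      rw [reduceAt]; abel]
    refine add_mem (Submodule.smul_mem _ _ (Submodule.subset_span
      ⟨t, ⟨(mem_uTerms.mp ht).2, hμ t ht⟩, rfl⟩)) (ih fun t' ht' => ?_)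
    rcases (hG.uTerms_reduceAt hP ht).2 t' ht' with hold | hlt
    · exact hμ t' hold
    · exact hlt.trans (hμ t ht)

/-- Write `x^ε = x^ε' x_j` with `x_j` nonmultiplicative for `x^α` and induct on `x^ε` in the
colex order. -/
theorem IsMarkedSetV.monomial_smul_mem_span_markedMul (hP : ∀ k, IsPommaretBasis (P k) (J k))
    (hG : IsMarkedSetV d J P gb)
    (hred : ∀ k, ∀ α ∈ P k, ∀ i : Fin (n+1), ¬ mult α i →
      Relation.ReflTransGen (RedStep P gb) ((monomial (Finsupp.single i 1) (1:A)) • gb α k) 0)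
    (ε : Exp n) {k : κ} {α : Exp n} (hα : α ∈ P k) :
    monomial ε (1 : A) • gb α k ∈ Submodule.span A (markedMul P gb '' {t | t.2 ∈ J t.1}) := by
  induction ε using (InvImage.wf (fun ε : Exp n => toColex ε) wellFounded_lt).induction
    generalizing k α with
  | h ε ih =>
  by_cases hε : multExp α ε
  · rw [← markedMul_add hP hα hε]
    exact Submodule.subset_span ⟨_, (hP k).mem_of_mem_pommaretCone hα ⟨ε, hε, add_comm ε α⟩, rfl⟩
  obtain ⟨j, hj, hjα⟩ : ∃ j ∈ ε.support, ¬ mult α j := by simpa [multExp] using hε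
  set ε' := ε - Finsupp.single j 1
  have hε' : ε = ε' + Finsupp.single j 1 := (tsub_add_cancel_of_le
    (Finsupp.single_le_iff.mpr (Nat.one_le_iff_ne_zero.mpr (Finsupp.mem_support_iff.mp hj)))).symm
  have hlower := hG.sub_mem_span_markedMul_of_reflTransGen hP (hred k α hα j hjα)
    fun t ht => hG.multKey_lt_of_mem_uTerms_monomial_smul hP hα (by simpa [multExp] using hjα) ht
  rw [sub_zero] at hlower
  rw [hε', ← one_mul (1 : A), ← monomial_mul, mul_smul]
  refine (Submodule.map_span_le (DistribSMul.toLinearMap A _ (monomial ε' (1 : A))) _ _).mpr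
    ?_ (Submodule.mem_map_of_mem hlower)
  rintro _ ⟨t, ⟨htJ, htμ⟩, rfl⟩
  have hhead := ((hP t.1).pommaretHead_mem htJ).1
  simp only [DistribSMul.toLinearMap_apply, markedMul, smul_smul, monomial_mul, one_mul]
  refine ih _ ?_ hhead
  rw [hε']
  exact add_lt_add_right htμ (toColex ε')

theorem IsMarkedSetV.restrictScalars_GmodS_le_span_markedMul
    (hP : ∀ k, IsPommaretBasis (P k) (J k)) (hG : IsMarkedSetV d J P gb)
    (hred : ∀ k, ∀ α ∈ P k, ∀ i : Fin (n+1), ¬ mult α i →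
      Relation.ReflTransGen (RedStep P gb) ((monomial (Finsupp.single i 1) (1:A)) • gb α k) 0) :
    (GmodS P gb).restrictScalars A ≤ Submodule.span A (markedMul P gb '' {t | t.2 ∈ J t.1}) := by
  have hmon : Submodule.span A (Set.range fun ε : Exp n => monomial ε (1 : A)) = ⊤ := by
    simpa [coe_basisMonomials] using (basisMonomials (Fin (n+1)) A).span_eq
  rw [GmodS, ← Submodule.span_smul_of_span_eq_top hmon, Submodule.span_le]
  rintro _ ⟨_, ⟨ε, rfl⟩, _, ⟨k, α, hα, rfl⟩, rfl⟩
  exact hG.monomial_smul_mem_span_markedMul hP hred ε hα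

/-- The elements of `G^(·)` are triangular with respect to their head terms, so a nonzero
combination of them keeps the head term with the largest multiplier. -/
theorem IsMarkedSetV.eq_zero_of_mem_span_markedMul (hP : ∀ k, IsPommaretBasis (P k) (J k))
    (hG : IsMarkedSetV d J P gb)
    (hh : h ∈ Submodule.span A (markedMul P gb '' {t | t.2 ∈ J t.1})) (hU : uTerms J h = ∅) :
    h = 0 := by
  obtain ⟨c, hc, rfl⟩ := (Finsupp.mem_span_image_iff_linearCombination A).mp hh
  suffices c = 0 by simp [this]
  by_contra hne
  obtain ⟨t, ht, hmax⟩ :=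
    c.support.exists_max_image (multKey P) (Finsupp.support_nonempty_iff.mpr hne)
  have htJ : t.2 ∈ J t.1 := hc ht
  have hcoeff : (Finsupp.linearCombination A (markedMul P gb) c t.1).coeff t.2 = c t := by
    rw [Finsupp.linearCombination_apply, Finsupp.sum, Finset.sum_apply, coeff_sum,
      Finset.sum_eq_single t]
    · simp [hG.coeff_markedMul_self hP htJ]
    · intro t' ht' hne
      simp only [Pi.smul_apply, coeff_smul, smul_eq_mul]
      by_contra h0
      have hlt := hG.multKey_lt_of_mem_uTerms_markedMul hP (hc ht')
        (mem_uTerms.mpr ⟨mem_support_iff.mpr (right_ne_zero_of_mul h0), htJ⟩) (Ne.symm hne)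
      exact (hmax t' ht').not_gt hlt
    · exact fun h0 => absurd ht h0
  have hmem : t ∈ uTerms J (Finsupp.linearCombination A (markedMul P gb) c) :=
    mem_uTerms.mpr ⟨mem_support_iff.mpr (hcoeff ▸ Finsupp.mem_support_iff.mp ht), htJ⟩
  rw [hU] at hmem
  exact Finset.notMem_empty t hmem

theorem IsMarkedSetV.sub_mem_GmodDeg_of_reflTransGen (hP : ∀ k, IsPommaretBasis (P k) (J k))
    (hG : IsMarkedSetV d J P gb) (hh : h ∈ homogCompV A d s)
    (hr : Relation.ReflTransGen (RedStep P gb) h h') : h - h' ∈ GmodDeg d P gb s := by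
  induction hr with
  | refl => simp
  | @tail b _ _ step ih =>
    obtain ⟨t, ht, rfl⟩ := step.exists_eq_reduceAt hP
    obtain ⟨hs, hJ⟩ := mem_uTerms.mp ht
    have hb : b ∈ homogCompV A d s := by simpa using sub_mem hh ih.2
    have hdeg : (degE t.2 : ℤ) + d t.1 = s := hb t.1 t.2 hs
    have hmem : markedMul P gb t ∈ GmodDeg d P gb s :=
      ⟨markedMul_mem_GmodS hP hJ, hdeg ▸ hG.markedMul_mem_homogCompV hP hJ⟩
    rw [show h - reduceAt P gb b t = (h - b) + (b t.1).coeff t.2 • markedMul P gb t by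
      rw [reduceAt]; abel]
    exact add_mem ih (Submodule.smul_mem _ _ hmem)

end Span

section MarkedBasis

variable {κ : Type*} [Fintype κ] [DecidableEq κ] {A : Type*} [CommRing A] {d : κ → ℤ}
  {J : κ → Set (Exp n)} {P : κ → Finset (Exp n)}
  {gb : Exp n → κ → κ → MvPolynomial (Fin (n+1)) A} {s : ℤ}
  {h : κ → MvPolynomial (Fin (n+1)) A}

theorem sum_coeff_smul_termV (h : κ → MvPolynomial (Fin (n+1)) A) :
    ∑ k, ∑ γ ∈ (h k).support, (h k).coeff γ • termV A γ k = h := by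
  ext l : 1
  simp only [Finset.sum_apply, Pi.smul_apply, termV, Pi.single_apply, smul_ite, smul_zero,
    smul_monomial, smul_eq_mul, mul_one, Finset.sum_ite_irrel, Finset.sum_const_zero,
    Finset.sum_ite_eq, Finset.mem_univ, if_true]
  exact (h l).support_sum_monomial_coeff

theorem mem_span_NUTermsDeg_iff :
    h ∈ Submodule.span A (NUTermsDeg A d J s) ↔ h ∈ homogCompV A d s ∧ uTerms J h = ∅ := by
  simp only [uTerms_eq_empty_iff]
  constructor
  · intro hh
    induction hh using Submodule.span_induction with
    | mem _ hx =>
      obtain ⟨k, γ, hγ, hdeg, rfl⟩ := hx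
      have hsupp : ∀ l, ∀ β ∈ (termV A γ k l).support, l = k ∧ β = γ := fun l β hβ => by
        rw [mem_support_iff, coeff_termV] at hβ
        by_contra hc
        exact hβ (if_neg hc)
      refine ⟨fun l β hβ => ?_, fun l β hβ => ?_⟩ <;> obtain ⟨rfl, rfl⟩ := hsupp l β hβ
      · exact hdeg
      · exact hγ
    | zero => exact ⟨zero_mem _, by simp⟩
    | add _ _ _ _ hx hy =>
      refine ⟨add_mem hx.1 hy.1, fun l β hβ => ?_⟩
      rcases Finset.mem_union.mp (support_add hβ) with hβ | hβ
      exacts [hx.2 l β hβ, hy.2 l β hβ]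
    | smul _ _ _ hx => exact ⟨Submodule.smul_mem _ _ hx.1, fun l β hβ => hx.2 l β (support_smul hβ)⟩
  · rintro ⟨hhom, hU⟩
    rw [← sum_coeff_smul_termV h]
    exact sum_mem fun k _ => sum_mem fun γ hγ =>
      Submodule.smul_mem _ _ (Submodule.subset_span ⟨k, γ, hU k γ hγ, hhom k γ hγ, rfl⟩)

theorem IsMarkedSetV.homogCompV_eq_sup (hP : ∀ k, IsPommaretBasis (P k) (J k))
    (hG : IsMarkedSetV d J P gb) (s : ℤ) :
    homogCompV A d s = GmodDeg d P gb s ⊔ Submodule.span A (NUTermsDeg A d J s) := by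
  refine le_antisymm (fun h hh => ?_)
    (sup_le inf_le_right fun h hh => (mem_span_NUTermsDeg_iff.mp hh).1)
  obtain ⟨h', hr, hU⟩ := hG.exists_reflTransGen_uTerms_eq_empty hP h
  have hsub := hG.sub_mem_GmodDeg_of_reflTransGen hP hh hr
  have hh' : h' ∈ homogCompV A d s := by simpa using sub_mem hh hsub.2
  rw [← sub_add_cancel h h']
  exact Submodule.add_mem_sup hsub (mem_span_NUTermsDeg_iff.mpr ⟨hh', hU⟩)

theorem IsMarkedSetV.GmodDeg_inf_span_eq_bot (hP : ∀ k, IsPommaretBasis (P k) (J k))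
    (hG : IsMarkedSetV d J P gb)
    (hred : ∀ k, ∀ α ∈ P k, ∀ i : Fin (n+1), ¬ mult α i →
      Relation.ReflTransGen (RedStep P gb) ((monomial (Finsupp.single i 1) (1:A)) • gb α k) 0)
    (s : ℤ) : GmodDeg d P gb s ⊓ Submodule.span A (NUTermsDeg A d J s) = ⊥ :=
  (Submodule.eq_bot_iff _).mpr fun _ ⟨⟨hGS, _⟩, hN⟩ =>
    hG.eq_zero_of_mem_span_markedMul hP (hG.restrictScalars_GmodS_le_span_markedMul hP hred hGS)
      (mem_span_NUTermsDeg_iff.mp hN).2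

theorem MarkedBasisProp.reflTransGen_zero (hB : MarkedBasisProp d J P gb)
    (hP : ∀ k, IsPommaretBasis (P k) (J k)) (hG : IsMarkedSetV d J P gb)
    (hh : h ∈ GmodDeg d P gb s) : Relation.ReflTransGen (RedStep P gb) h 0 := by
  obtain ⟨h', hr, hU⟩ := hG.exists_reflTransGen_uTerms_eq_empty hP h
  have hh' : h' ∈ GmodDeg d P gb s := by
    simpa using sub_mem hh (hG.sub_mem_GmodDeg_of_reflTransGen hP hh.2 hr)
  have hmem : h' ∈ GmodDeg d P gb s ⊓ Submodule.span A (NUTermsDeg A d J s) :=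
    ⟨hh', mem_span_NUTermsDeg_iff.mpr ⟨hh'.2, hU⟩⟩
  rw [(hB s).2, Submodule.mem_bot] at hmem
  exact hmem ▸ hr

end MarkedBasis

theorem statement12_general {n : ℕ} {κ : Type*} [Fintype κ] [DecidableEq κ]
    {A : Type*} [CommRing A]
    (d : κ → ℤ) (J : κ → Set (Exp n)) (P : κ → Finset (Exp n))
    (hQS : ∀ k, IsMonomialIdeal (J k) ∧ IsPommaretBasis (P k) (J k))
    (gb : Exp n → κ → (κ → MvPolynomial (Fin (n+1)) A))
    (hG : IsMarkedSetV d J P gb) :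
    MarkedBasisProp d J P gb ↔
      ∀ k, ∀ α ∈ P k, ∀ i : Fin (n+1), ¬ mult α i →
        Relation.ReflTransGen (RedStep P gb)
          ((monomial (Finsupp.single i 1) (1:A)) • gb α k) 0 := by
  have hP k : IsPommaretBasis (P k) (J k) := (hQS k).2
  constructor
  · intro hB k α hα i _
    have hxf : monomial (Finsupp.single i 1) (1 : A) • gb α k ∈
        GmodDeg d P gb (degE (Finsupp.single i 1) + (degE α + d k)) :=
      ⟨Submodule.smul_mem _ _ (Submodule.subset_span (s := GSet P gb) ⟨k, α, hα, rfl⟩),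
        monomial_smul_mem_homogCompV (hG.mem_homogCompV hα)⟩
    exact hB.reflTransGen_zero hP hG hxf
  · exact fun hred s => ⟨hG.homogCompV_eq_sup hP s, hG.GmodDeg_inf_span_eq_bot hP hred s⟩

/-- Theorem `algoMBasis`: `G` is a `P(U)`-marked basis iff for every
`f_α^k ∈ G` and every nonmultiplicative variable `x_i` of `x^α`, the product `x_i f_α^k`
reduces to `0` under `→_G`. -/
theorem statement12 {n : ℕ} {κ : Type*} [Fintype κ] [DecidableEq κ] (hm : Nonempty κ)
    {A : Type*} [CommRing A] [IsNoetherianRing A]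
    (d : κ → ℤ) (J : κ → Set (Exp n)) (P : κ → Finset (Exp n))
    (hQS : ∀ k, IsMonomialIdeal (J k) ∧ IsPommaretBasis (P k) (J k))
    (gb : Exp n → κ → (κ → MvPolynomial (Fin (n+1)) A))
    (hG : IsMarkedSetV d J P gb) :
    MarkedBasisProp d J P gb ↔
      ∀ k, ∀ α ∈ P k, ∀ i : Fin (n+1), ¬ mult α i →
        Relation.ReflTransGen (RedStep P gb)
          ((monomial (Finsupp.single i 1) (1:A)) • gb α k) 0 :=
  statement12_general d J P hQS gb hG

end MB
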